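/- arXiv:0910.1132 — 6 statements merged into one kernel-verified Lean document; each statement's English description precedes it below -/
import Mathlib

section
/- Let q be a prime power and let K be a finite field with exactly q² elements. Then the number of pairs (x, y) ∈ K × K satisfying y^(q+1) = x^q + x equals q³. -/
open Polynomial

/-- Let `q` be a prime power and `K` a finite field with exactly `q²` elements.
Then the number of pairs `(x, y) ∈ K × K` with `y^(q+1) = x^q + x` equals `q³`. -/
theorem hermitian_affine_point_count (q : ℕ) (hq : IsPrimePow q)
    (K : Type*) [Field K] [Fintype K] (hK : Fintype.card K = q ^ 2) :
    Nat.card {xy : K × K // xy.2 ^ (q + 1) = xy.1 ^ q + xy.1} = q ^ 3 := by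
  classical
  have hq2 : 2 ≤ q := hq.two_le
  have hq0 : 0 < q := by omega
  have hq1 : q ≠ 1 := by omega
  obtain ⟨p, n, hp, hn, hpn⟩ := hq
  have hp' : p.Prime := Nat.prime_iff.mpr hp
  haveI := Fact.mk hp'
  -- characteristic
  have hchar : CharP K p := by
    haveI h1 : CharP K (ringChar K) := ringChar.charP K
    obtain ⟨m, hpr, hcard⟩ := FiniteField.card K (ringChar K)
    have hdvd : p ∣ ringChar K ^ (m : ℕ) := by
      rw [← hcard, hK, ← hpn]
      exact dvd_pow (dvd_pow_self p hn.ne') (by positivity)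
    have : p = ringChar K :=
      (Nat.prime_dvd_prime_iff_eq hp' hpr).mp (hp'.dvd_of_dvd_pow hdvd)
    rwa [this]
  -- Frobenius-type additivity of x ↦ x^q
  have hfrob : ∀ a b : K, (a + b) ^ q = a ^ q + b ^ q := by
    intro a b
    rw [← hpn]
    exact add_pow_char_pow a b p n
  have hpowcard : ∀ a : K, a ^ q ^ 2 = a := by
    intro a
    have := FiniteField.pow_card a
    rwa [hK] at this
  -- the additive map T x = x^q + x
  let T : K →+ K :=
    { toFun := fun x => x ^ q + x
      map_zero' := by simp [zero_pow hq0.ne']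
      map_add' := by intro a b; simp only [hfrob]; ring }
  have hT : ∀ x : K, T x = x ^ q + x := fun _ => rfl
  -- root-counting bound
  have root_bound : ∀ f : K[X], f.coeff q = 1 → f.natDegree ≤ q →
      Fintype.card {x : K // f.eval x = 0} ≤ q := by
    intro f hc hd
    have hf0 : f ≠ 0 := fun h => by simp [h] at hc
    rw [Fintype.card_subtype]
    have hsub : (Finset.univ.filter fun x : K => f.eval x = 0) ⊆ f.roots.toFinset := by
      intro x hx
      simp only [Finset.mem_filter, Finset.mem_univ, true_and] at hx
      simp [Multiset.mem_toFinset, mem_roots, hf0, IsRoot, hx]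
    calc (Finset.univ.filter fun x : K => f.eval x = 0).card
        ≤ f.roots.toFinset.card := Finset.card_le_card hsub
      _ ≤ Multiset.card f.roots := f.roots.toFinset_card_le
      _ ≤ f.natDegree := f.card_roots'
      _ ≤ q := hd
  -- kernel bound
  have hker_card : Nat.card T.ker ≤ q := by
    rw [Nat.card_eq_fintype_card]
    have h1 : Fintype.card T.ker
        = Fintype.card {x : K // (X ^ q + X : K[X]).eval x = 0} := by
      refine Fintype.card_congr (Equiv.subtypeEquiv (Equiv.refl K) fun x => ?_)
      simp [AddMonoidHom.mem_ker, hT]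
    rw [h1]
    refine root_bound _ ?_ ?_
    · simp [coeff_X, hq1, Ne.symm hq1]
    · refine le_trans (natDegree_add_le _ _) ?_
      simp [natDegree_X_pow]; omega
  -- the subfield-of-fixed-points set
  have hF_card : Nat.card {x : K // x ^ q = x} ≤ q := by
    rw [Nat.card_eq_fintype_card]
    have h1 : Fintype.card {x : K // x ^ q = x}
        = Fintype.card {x : K // (X ^ q - X : K[X]).eval x = 0} := by
      refine Fintype.card_congr (Equiv.subtypeEquiv (Equiv.refl K) fun x => ?_)
      simp [sub_eq_zero]
    rw [h1]
    refine root_bound _ ?_ ?_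
    · simp [coeff_X, hq1, Ne.symm hq1]
    · refine le_trans (natDegree_sub_le _ _) ?_
      simp [natDegree_X_pow]; omega
  -- range lands in fixed points
  have hrange_sub : ∀ c : K, c ∈ T.range → c ^ q = c := by
    rintro c ⟨a, rfl⟩
    rw [hT]
    calc (a ^ q + a) ^ q = (a ^ q) ^ q + a ^ q := hfrob _ _
      _ = a ^ (q * q) + a ^ q := by rw [← pow_mul]
      _ = a ^ q ^ 2 + a ^ q := by rw [show q * q = q ^ 2 by ring]
      _ = a ^ q + a := by rw [hpowcard, add_comm]
  have hrange_card : Nat.card T.range ≤ q := by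
    rw [Nat.card_eq_fintype_card]
    rw [Nat.card_eq_fintype_card] at hF_card
    refine le_trans (Fintype.card_le_of_injective
      (fun c => ⟨(c : K), hrange_sub c c.2⟩) ?_) hF_card
    intro a b h
    simp only [Subtype.mk.injEq] at h
    exact Subtype.ext h
  -- first isomorphism theorem counting
  have hiso : Nat.card K = Nat.card T.range * Nat.card T.ker := by
    rw [AddSubgroup.card_eq_card_quotient_mul_card_addSubgroup T.ker,
      Nat.card_congr (QuotientAddGroup.quotientKerEquivRange T).toEquiv]
  have hcardK : Nat.card K = q * q := by
    rw [Nat.card_eq_fintype_card, hK, sq]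
  have hker_eq : Nat.card T.ker = q := by
    have h1 : q * q ≤ q * Nat.card T.ker := by
      calc q * q = Nat.card T.range * Nat.card T.ker := by rw [← hcardK, hiso]
        _ ≤ q * Nat.card T.ker := Nat.mul_le_mul_right _ hrange_card
    have := Nat.le_of_mul_le_mul_left h1 hq0
    omega
  have hrange_eq : Nat.card T.range = q := by
    have : q * q = Nat.card T.range * q := by rw [← hcardK, hiso, hker_eq]
    have h2 : Nat.card T.range * q = q * q := this.symm
    exact Nat.eq_of_mul_eq_mul_right hq0 (by omega)
  -- surjectivity of T onto fixed points
  have hsurj : ∀ c : K, c ^ q = c → ∃ a : K, a ^ q + a = c := by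
    intro c hc
    have hsub : (T.range : Set K) ⊆ {x : K | x ^ q = x} := fun x hx => hrange_sub x hx
    have hle : ({x : K | x ^ q = x} : Set K).ncard ≤ ((T.range : Set K)).ncard := by
      rw [← Nat.card_coe_set_eq, ← Nat.card_coe_set_eq]
      have h1 : Nat.card {x : K | x ^ q = x} ≤ q := hF_card
      have h2 : Nat.card (T.range : Set K) = q := hrange_eq
      omega
    have heq := Set.eq_of_subset_of_ncard_le hsub hle (Set.toFinite _)
    have : c ∈ (T.range : Set K) := heq.symm ▸ (hc : c ∈ {x : K | x ^ q = x})
    obtain ⟨a, ha⟩ := this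
    exact ⟨a, ha⟩
  -- each fiber has q elements
  have hfiber : ∀ c : K, c ^ q = c →
      Nat.card {x : K // x ^ q + x = c} = q := by
    intro c hc
    obtain ⟨a, ha⟩ := hsurj c hc
    have e : {x : K // x ^ q + x = c} ≃ T.ker := by
      refine ⟨fun x => ⟨x.1 - a, ?_⟩, fun x => ⟨x.1 + a, ?_⟩, ?_, ?_⟩
      · have : T (x.1 - a) = T x.1 - T a := map_sub T _ _
        rw [AddMonoidHom.mem_ker, this, hT, hT, x.2, ha, sub_self]
      · have h2 : T x.1 = 0 := x.2
        calc (x.1 + a) ^ q + (x.1 + a) = T (x.1 + a) := (hT _).symm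
          _ = T x.1 + T a := map_add T _ _
          _ = 0 + (a ^ q + a) := by rw [h2, hT]
          _ = c := by rw [zero_add, ha]
      · intro x; ext; simp
      · intro x; ext; simp
    rw [Nat.card_congr e, hker_eq]
  -- norm values are fixed points
  have hnorm : ∀ y : K, (y ^ (q + 1)) ^ q = y ^ (q + 1) := by
    intro y
    calc (y ^ (q + 1)) ^ q = y ^ ((q + 1) * q) := (pow_mul _ _ _).symm
      _ = y ^ (q * q) * y ^ q := by rw [add_mul, one_mul, pow_add]
      _ = y ^ q ^ 2 * y ^ q := by rw [show q * q = q ^ 2 by ring]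
      _ = y * y ^ q := by rw [hpowcard]
      _ = y ^ (q + 1) := (pow_succ' y q).symm
  -- final count
  have e : {xy : K × K // xy.2 ^ (q + 1) = xy.1 ^ q + xy.1}
      ≃ Σ y : K, {x : K // x ^ q + x = y ^ (q + 1)} :=
    ⟨fun z => ⟨z.1.2, z.1.1, z.2.symm⟩, fun z => ⟨(z.2.1, z.1), z.2.2.symm⟩,
      fun z => rfl, fun z => rfl⟩
  rw [Nat.card_congr e, Nat.card_eq_fintype_card, Fintype.card_sigma]
  have : ∀ y : K, Fintype.card {x : K // x ^ q + x = y ^ (q + 1)} = q := by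
    intro y
    rw [← Nat.card_eq_fintype_card]
    exact hfiber _ (hnorm y)
  simp only [this, Finset.sum_const, Finset.card_univ, smul_eq_mul, hK]
  ring
end

section
/- Let q be an odd prime power, F a finite field with exactly q elements, K an algebraic closure of F, and a ∈ F. Let χ denote the quadratic character of F (so χ(t) = 1 if t is a nonzero square, χ(t) = −1 if t is a nonsquare, and χ(0) = 0). Then the set of pairs (x, y) ∈ K × K satisfying y² = x^q − x, x^q + a = x (with a viewed in K via the inclusion F ⊆ K), and y^q = y is finite, and its cardinality, as an integer, equals q·(1 + χ(−a)). -/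
/-!
Over `F = 𝔽_q`, the conditions split: `x^q + a = x` forces `x^q - x = -a`, so the fixed points
are the pairs `(x, y)` with `x` a root of the Artin–Schreier polynomial `X^q - X + a` and
`y ∈ F` a square root of `-a`. The Artin–Schreier polynomial has derivative `-1`, hence `q`
distinct roots in `K`, while `-a` has `1 + χ(-a)` square roots in `F`.
-/

open Polynomial

namespace FiniteField

variable {F K : Type*} [Field F] [Fintype F] [Field K] [Algebra F K]

/-- `X^q - X` already has its `q` roots in `F`, so it has no others in `K`. -/
theorem pow_card_eq_self_iff_mem_range {z : K} :
    z ^ Fintype.card F = z ↔ z ∈ Set.range (algebraMap F K) := by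
  have hne : (X ^ Fintype.card F - X : F[X]) ≠ 0 := X_pow_card_sub_X_ne_zero F Fintype.one_lt_card
  have hroots : (map (algebraMap F K) (X ^ Fintype.card F - X)).roots =
      Finset.univ.val.map (algebraMap F K) := by
    rw [← roots_X_pow_card_sub_X]
    refine (roots_map_of_injective_of_card_eq_natDegree (algebraMap F K).injective ?_).symm
    rw [roots_X_pow_card_sub_X, Finset.card_val, Finset.card_univ,
      X_pow_card_sub_X_natDegree_eq F Fintype.one_lt_card]
  have hmem : z ∈ (map (algebraMap F K) (X ^ Fintype.card F - X)).roots ↔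
      z ∈ Finset.univ.val.map (algebraMap F K) := by
    rw [hroots]
  rw [mem_roots (map_ne_zero hne)] at hmem
  simpa [sub_eq_zero] using hmem

theorem natDegree_X_pow_card_sub_X_add_C (a : F) :
    (X ^ Fintype.card F - X + C a).natDegree = Fintype.card F := by
  rw [natDegree_add_C, X_pow_card_sub_X_natDegree_eq F Fintype.one_lt_card]

theorem separable_X_pow_card_sub_X_add_C (a : F) : (X ^ Fintype.card F - X + C a).Separable := by
  rw [separable_def, show derivative (X ^ Fintype.card F - X + C a) = -1 by
    simp [derivative_X_pow]]
  exact isCoprime_one_right.neg_right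

theorem setOf_pow_card_add_algebraMap_eq_self (a : F) :
    {x : K | x ^ Fintype.card F + algebraMap F K a = x} =
      (X ^ Fintype.card F - X + C a).rootSet K := by
  have hne : X ^ Fintype.card F - X + C a ≠ 0 := ne_zero_of_natDegree_gt (n := 0) <| by
    rw [natDegree_X_pow_card_sub_X_add_C]
    exact Fintype.card_pos
  ext x
  simp only [Set.mem_ofPred_eq, mem_rootSet_of_ne hne, map_add, map_sub, aeval_X_pow, aeval_X,
    aeval_C]
  constructor <;> intro h <;> linear_combination h

theorem natCard_setOf_pow_card_add_algebraMap_eq_self [IsAlgClosed K] (a : F) :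
    Nat.card {x : K | x ^ Fintype.card F + algebraMap F K a = x} = Fintype.card F := by
  rw [setOf_pow_card_add_algebraMap_eq_self, Nat.card_eq_fintype_card,
    card_rootSet_eq_natDegree (separable_X_pow_card_sub_X_add_C a) (IsAlgClosed.splits _),
    natDegree_X_pow_card_sub_X_add_C]

theorem setOf_sq_eq_algebraMap_and_pow_card_eq_self (c : F) :
    {y : K | y ^ 2 = algebraMap F K c ∧ y ^ Fintype.card F = y} =
      algebraMap F K '' {b : F | b ^ 2 = c} := by
  ext y
  simp only [Set.mem_ofPred_eq, Set.mem_image, pow_card_eq_self_iff_mem_range]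
  constructor
  · rintro ⟨hsq, b, rfl⟩
    exact ⟨b, (algebraMap F K).injective (by rw [map_pow, hsq]), rfl⟩
  · rintro ⟨b, rfl, rfl⟩
    exact ⟨(map_pow _ _ _).symm, b, rfl⟩

theorem ringChar_ne_two_of_odd_card (h : Odd (Fintype.card F)) : ringChar F ≠ 2 := fun h2 => by
  have := even_card_of_char_two h2
  rw [Nat.odd_iff] at h
  omega

end FiniteField

theorem setOf_sq_eq_pow_sub_self_and_pow_add_eq_self_and_pow_eq_self {R : Type*} [CommRing R]
    (n : ℕ) (c : R) :
    {xy : R × R | xy.2 ^ 2 = xy.1 ^ n - xy.1 ∧ xy.1 ^ n + c = xy.1 ∧ xy.2 ^ n = xy.2} =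
      {x : R | x ^ n + c = x} ×ˢ {y : R | y ^ 2 = -c ∧ y ^ n = y} := by
  ext ⟨x, y⟩
  simp only [Set.mem_ofPred_eq, Set.mem_prod]
  constructor
  · rintro ⟨hcurve, hx, hy⟩
    exact ⟨hx, by linear_combination hcurve + hx, hy⟩
  · rintro ⟨hx, hsq, hy⟩
    exact ⟨by linear_combination hsq - hx, hx, hy⟩

open FiniteField in
theorem frobenius_translation_fixed_points_general (q : ℕ) (hodd : Odd q)
    (F : Type*) [Field F] [Fintype F] [DecidableEq F] (hF : Fintype.card F = q)
    (K : Type*) [Field K] [Algebra F K] [IsAlgClosure F K] (a : F) :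
    {xy : K × K | xy.2 ^ 2 = xy.1 ^ q - xy.1 ∧
        xy.1 ^ q + algebraMap F K a = xy.1 ∧ xy.2 ^ q = xy.2}.Finite ∧
      (Nat.card {xy : K × K | xy.2 ^ 2 = xy.1 ^ q - xy.1 ∧
          xy.1 ^ q + algebraMap F K a = xy.1 ∧ xy.2 ^ q = xy.2} : ℤ)
        = q * (1 + quadraticChar F (-a)) := by
  subst hF
  have : IsAlgClosed K := IsAlgClosure.isAlgClosed F
  rw [setOf_sq_eq_pow_sub_self_and_pow_add_eq_self_and_pow_eq_self, ← map_neg,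
    setOf_sq_eq_algebraMap_and_pow_card_eq_self]
  refine ⟨?_, ?_⟩
  · rw [setOf_pow_card_add_algebraMap_eq_self]
    exact (rootSet_finite _ K).prod ((Set.toFinite _).image _)
  · rw [Nat.card_congr (Equiv.Set.prod _ _), Nat.card_prod,
      natCard_setOf_pow_card_add_algebraMap_eq_self,
      Nat.card_image_of_injective (algebraMap F K).injective, Nat.card_coe_set_eq,
      Set.ncard_eq_toFinset_card', Nat.cast_mul,
      quadraticChar_card_sqrts (ringChar_ne_two_of_odd_card hodd)]
    ring

/-- Fixed-point count for translation-composed-with-Frobenius on the affine curve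
`y² = x^q − x` over an algebraic closure of the field `F` with `q` elements:
the number of fixed points is `q·(1 + χ(−a))`, `χ` the quadratic character of `F`. -/
theorem frobenius_translation_fixed_points (q : ℕ) (hq : IsPrimePow q) (hodd : Odd q)
    (F : Type*) [Field F] [Fintype F] [DecidableEq F] (hF : Fintype.card F = q)
    (K : Type*) [Field K] [Algebra F K] [IsAlgClosure F K] (a : F) :
    {xy : K × K | xy.2 ^ 2 = xy.1 ^ q - xy.1 ∧
        xy.1 ^ q + algebraMap F K a = xy.1 ∧ xy.2 ^ q = xy.2}.Finite ∧
      (Nat.card {xy : K × K | xy.2 ^ 2 = xy.1 ^ q - xy.1 ∧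
          xy.1 ^ q + algebraMap F K a = xy.1 ∧ xy.2 ^ q = xy.2} : ℤ)
        = q * (1 + quadraticChar F (-a)) :=
  frobenius_translation_fixed_points_general q hodd F hF K a
end

section
/- Let q be an odd prime power and let K be a finite field with exactly q² elements. Then the number of pairs (x, y) ∈ K × K satisfying y² = x^q − x equals q² − (−1)^((q−1)/2)·q·(q−1). -/
open Finset Polynomial

private lemma hq_aux_roots {K : Type*} [Field K] [Fintype K] [DecidableEq K]
    (P : K[X]) (hP : P ≠ 0) :
    (Finset.univ.filter fun x => P.eval x = 0).card ≤ P.natDegree := by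
  refine le_trans (Finset.card_le_card ?_) (le_trans (Multiset.toFinset_card_le _) P.card_roots')
  intro x hx
  simp only [Finset.mem_filter] at hx
  rw [Multiset.mem_toFinset, Polynomial.mem_roots hP]
  exact hx.2

private lemma hq_aux_fiber {K : Type*} [AddCommGroup K] [Fintype K] [DecidableEq K]
    (f : K →+ K) (a : K) (ha : ∃ x, f x = a) :
    (Finset.univ.filter fun x => f x = a).card
      = (Finset.univ.filter fun x => f x = 0).card := by
  obtain ⟨x₀, rfl⟩ := ha
  refine Finset.card_bij (fun x _ => x - x₀) ?_ ?_ ?_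
  · intro x hx
    simp only [Finset.mem_filter, Finset.mem_univ, true_and] at hx ⊢
    rw [map_sub, hx, sub_self]
  · intro x hx y hy h
    exact sub_left_injective h
  · intro y hy
    simp only [Finset.mem_filter, Finset.mem_univ, true_and] at hy ⊢
    exact ⟨y + x₀, by rw [map_add, hy, zero_add], by simp⟩

private lemma hq_aux_kercard {K : Type*} [AddCommGroup K] [Fintype K] [DecidableEq K]
    (f : K →+ K) :
    Nat.card f.ker = (Finset.univ.filter fun x => f x = 0).card := by
  rw [Nat.card_eq_fintype_card, ← Fintype.card_subtype]
  exact Fintype.card_congr (Equiv.subtypeEquivRight fun x => f.mem_ker)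

private lemma hq_aux_rangecard {K : Type*} [AddCommGroup K] [Fintype K] [DecidableEq K]
    (f : K →+ K) :
    Nat.card f.range = (Finset.univ.filter fun a => ∃ x, f x = a).card := by
  rw [Nat.card_eq_fintype_card, ← Fintype.card_subtype]
  exact Fintype.card_congr (Equiv.subtypeEquivRight fun x => f.mem_range)

private lemma hq_aux_prod {K : Type*} [AddCommGroup K] (f : K →+ K) :
    Nat.card K = Nat.card f.range * Nat.card f.ker := by
  rw [AddSubgroup.card_eq_card_quotient_mul_card_addSubgroup f.ker]
  congr 1
  exact Nat.card_congr (QuotientAddGroup.quotientKerEquivRange f).toEquiv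

/-- The number of points `(x,y) ∈ K × K`, `K` the field with `q²` elements (`q` odd),
satisfying `y² = x^q − x`, equals `q² − (−1)^((q−1)/2)·q·(q−1)`. -/
theorem hyperelliptic_point_count (q : ℕ) (hq : IsPrimePow q) (hodd : Odd q)
    (K : Type*) [Field K] [Fintype K] (hK : Fintype.card K = q ^ 2) :
    (Nat.card {xy : K × K // xy.2 ^ 2 = xy.1 ^ q - xy.1} : ℤ)
      = (q : ℤ) ^ 2 - (-1 : ℤ) ^ ((q - 1) / 2) * q * (q - 1) := by
  classical
  obtain ⟨p, n, hp, hn, hpn⟩ := hq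
  have hp' : p.Prime := hp.nat_prime
  haveI : Fact p.Prime := ⟨hp'⟩
  have hq2 : 2 ≤ q := by
    calc 2 ≤ p := hp'.two_le
      _ ≤ p ^ n := Nat.le_self_pow hn.ne' p
      _ = q := hpn
  have hq0 : 0 < q := by omega
  have hpodd : Odd p := by
    rcases hp'.eq_two_or_odd' with h | h
    · subst h
      have hev : Even q := by
        rw [← hpn]
        exact (Nat.even_pow).mpr ⟨even_two, hn.ne'⟩
      exact absurd hodd (Nat.not_odd_iff_even.mpr hev)
    · exact h
  have hp2 : p ≠ 2 := by
    rintro rfl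
    obtain ⟨k, hk⟩ := hpodd
    omega
  -- characteristic of K is p
  have hchar : CharP K p := by
    have hcp : CharP K (ringChar K) := ringChar.charP K
    obtain ⟨m, hm1, hm2⟩ := FiniteField.card K (ringChar K)
    have hdvd : p ∣ ringChar K ^ (m : ℕ) := by
      rw [← hm2, hK, ← hpn, ← pow_mul]
      exact dvd_pow_self p (by positivity)
    have := (Nat.Prime.dvd_of_dvd_pow hp' hdvd)
    have heq : p = ringChar K := ((Nat.prime_dvd_prime_iff_eq hp' hm1).mp this)
    rwa [heq]
  haveI := hchar
  have hring2 : ringChar K ≠ 2 := by rw [ringChar.eq K p]; exact hp2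
  -- the additive map x ↦ x^q - x
  have hadd : ∀ x y : K, (x + y) ^ q - (x + y) = (x ^ q - x) + (y ^ q - y) := by
    intro x y
    rw [← hpn, add_pow_char_pow]
    ring
  set f : K →+ K := AddMonoidHom.mk' (fun x => x ^ q - x) hadd with hfdef
  have hf : ∀ x, f x = x ^ q - x := fun _ => rfl
  -- every element of the range satisfies a^q = -a
  have hrange_neg : ∀ a ∈ Set.range f, a ^ q = -a := by
    rintro a ⟨x, rfl⟩
    rw [hf, ← hpn, sub_pow_char_pow, hpn, ← pow_mul, ← pow_two]
    rw [← hK, FiniteField.pow_card]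
    ring
  -- cardinality of kernel and range
  set b := Nat.card f.ker with hb
  set R : Finset K := Finset.univ.filter fun a => ∃ x, f x = a with hR
  have hker_le : b ≤ q := by
    rw [hb, hq_aux_kercard]
    have : (Finset.univ.filter fun x : K => f x = 0)
        = Finset.univ.filter fun x : K => (X ^ q - X : K[X]).eval x = 0 := by
      apply Finset.filter_congr
      intro x _
      simp [hf]
    rw [this]
    have hdeg : (X ^ q - X : K[X]).natDegree = q := by
      rw [natDegree_sub_eq_left_of_natDegree_lt] <;>
        simp [natDegree_X_pow, natDegree_X]; omega
    calc _ ≤ (X ^ q - X : K[X]).natDegree := by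
              apply hq_aux_roots
              intro h
              rw [h] at hdeg
              simp at hdeg; omega
      _ = q := hdeg
  have hrange_le : R.card ≤ q := by
    have hsub : R ⊆ Finset.univ.filter fun a : K => (X ^ q + X : K[X]).eval a = 0 := by
      intro a ha
      rw [hR, Finset.mem_filter] at ha
      simp only [Finset.mem_filter, Finset.mem_univ, true_and, eval_add, eval_pow, eval_X]
      have := hrange_neg a (by obtain ⟨_, x, hx⟩ := ha; exact ⟨x, hx⟩)
      rw [this]; ring
    have hdeg : (X ^ q + X : K[X]).natDegree = q := by
      rw [natDegree_add_eq_left_of_natDegree_lt] <;>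
        simp [natDegree_X_pow, natDegree_X]; omega
    calc R.card ≤ _ := Finset.card_le_card hsub
      _ ≤ (X ^ q + X : K[X]).natDegree := by
              apply hq_aux_roots
              intro h
              rw [h] at hdeg
              simp at hdeg; omega
      _ = q := hdeg
  have hprod : R.card * b = q ^ 2 := by
    rw [hb, hR, ← hq_aux_rangecard f, ← hq_aux_prod f, Nat.card_eq_fintype_card, hK]
  have hbq : b = q := by
    have h1 : q * q ≤ q * b := by
      calc q * q = q ^ 2 := (sq q).symm
        _ = R.card * b := hprod.symm
        _ ≤ q * b := Nat.mul_le_mul_right b hrange_le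
    have := Nat.le_of_mul_le_mul_left h1 hq0
    omega
  have hRq : R.card = q := by
    have h1 : R.card * b = q * q := by rw [hprod, pow_two]
    rw [hbq] at h1
    exact Nat.eq_of_mul_eq_mul_right hq0 h1
  -- the quadratic character value on nonzero range elements
  set ε : ℤ := (-1 : ℤ) ^ ((q + 1) / 2) with hε
  have hχ : ∀ a ∈ R.erase 0, quadraticChar K a = ε := by
    intro a ha
    rw [Finset.mem_erase, hR, Finset.mem_filter] at ha
    obtain ⟨ha0, -, x, hx⟩ := ha
    have haq : a ^ (q - 1) = -1 := by
      have h1 : a ^ (q - 1) * a = (-1) * a := by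
        rw [← pow_succ]
        have : q - 1 + 1 = q := by omega
        rw [this, hrange_neg a ⟨x, hx⟩]; ring
      exact mul_right_cancel₀ ha0 h1
    have hcard2 : Fintype.card K / 2 = (q - 1) * ((q + 1) / 2) := by
      rw [hK]
      obtain ⟨k, hk⟩ := hodd
      subst hk
      have h1 : (2 * k + 1) ^ 2 = 2 * (2 * k * (k + 1)) + 1 := by ring
      have h2 : 2 * k + 1 - 1 = 2 * k := by omega
      have h3 : (2 * k + 1 + 1) / 2 = k + 1 := by omega
      have h4 : 2 * k * (k + 1) = 2 * k * (k + 1) := rfl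
      rw [h1, h2, h3]
      omega
    have heval : a ^ (Fintype.card K / 2) = (-1 : K) ^ ((q + 1) / 2) := by
      rw [hcard2, pow_mul, haq]
    rcases Nat.even_or_odd ((q + 1) / 2) with he | he
    · have h1 : a ^ (Fintype.card K / 2) = 1 := by rw [heval, he.neg_one_pow]
      have := (FiniteField.isSquare_iff hring2 ha0).mpr h1
      rw [(quadraticChar_one_iff_isSquare ha0).mpr this, hε, he.neg_one_pow]
    · have h1 : a ^ (Fintype.card K / 2) = -1 := by rw [heval, he.neg_one_pow]
      have hnot : ¬ IsSquare a := by
        intro hsq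
        rw [(FiniteField.isSquare_iff hring2 ha0).mp hsq] at h1
        exact Ring.neg_one_ne_one_of_char_ne_two hring2 h1.symm
      rw [quadraticChar_neg_one_iff_not_isSquare.mpr hnot, hε, he.neg_one_pow]
  -- character sum
  have hsum : ∑ x : K, (quadraticChar K (x ^ q - x)) = (q : ℤ) * ((q - 1 : ℕ) * ε) := by
    have h1 : ∑ x : K, (quadraticChar K (x ^ q - x)) = ∑ x : K, quadraticChar K (f x) := by
      simp [hf]
    rw [h1, ← Finset.sum_fiberwise_of_maps_to (fun x _ => Finset.mem_univ (f x))
      (fun x => quadraticChar K (f x))]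
    have h2 : ∀ a : K, ∑ x ∈ Finset.univ.filter fun x => f x = a,
        quadraticChar K (f x) = ((Finset.univ.filter fun x => f x = a).card : ℤ)
          * quadraticChar K a := by
      intro a
      rw [Finset.sum_congr rfl (fun x hx => by
        rw [(Finset.mem_filter.mp hx).2]), Finset.sum_const, nsmul_eq_mul]
    simp_rw [h2]
    rw [← Finset.sum_subset (Finset.subset_univ R) (fun a _ ha => by
      have : (Finset.univ.filter fun x => f x = a) = ∅ := by
        rw [Finset.filter_eq_empty_iff]
        intro x _
        intro hx
        exact ha (by rw [hR, Finset.mem_filter]; exact ⟨Finset.mem_univ a, x, hx⟩)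
      rw [this]; simp)]
    have h3 : ∀ a ∈ R, ((Finset.univ.filter fun x => f x = a).card : ℤ)
        * quadraticChar K a = (q : ℤ) * quadraticChar K a := by
      intro a ha
      rw [hR, Finset.mem_filter] at ha
      rw [hq_aux_fiber f a ha.2, ← hq_aux_kercard f, ← hb, hbq]
    rw [Finset.sum_congr rfl h3, ← Finset.mul_sum]
    congr 1
    have h0R : (0 : K) ∈ R := by
      rw [hR, Finset.mem_filter]
      exact ⟨Finset.mem_univ 0, 0, by rw [hf]; simp [hq0.ne']⟩
    rw [← Finset.add_sum_erase R _ h0R]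
    rw [Finset.sum_congr rfl (fun a ha => hχ a ha), Finset.sum_const, nsmul_eq_mul,
      Finset.card_erase_of_mem h0R, hRq]
    simp
  -- point count
  have hcount : (Nat.card {xy : K × K // xy.2 ^ 2 = xy.1 ^ q - xy.1} : ℤ)
      = ∑ x : K, ((quadraticChar K (x ^ q - x)) + 1) := by
    rw [Nat.card_eq_fintype_card,
      Fintype.card_congr (Equiv.subtypeProdEquivSigmaSubtype
        (fun (a : K) (b : K) => b ^ 2 = a ^ q - a)), Fintype.card_sigma]
    push_cast
    refine Finset.sum_congr rfl fun x _ => ?_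
    rw [← quadraticChar_card_sqrts hring2 (x ^ q - x)]
    congr 1
    rw [Fintype.card_subtype]
    congr 1
    simp [Set.toFinset_setOf]
  rw [hcount, Finset.sum_add_distrib, Finset.sum_const, Finset.card_univ, hK, hsum]
  have hq1cast : ((q - 1 : ℕ) : ℤ) = (q : ℤ) - 1 := by
    have : 1 ≤ q := by omega
    push_cast [this]; ring
  have hεval : ε = -(-1 : ℤ) ^ ((q - 1) / 2) := by
    rw [hε]
    obtain ⟨k, hk⟩ := hodd
    subst hk
    have h1 : (2 * k + 1 + 1) / 2 = k + 1 := by omega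
    have h2 : (2 * k + 1 - 1) / 2 = k := by omega
    rw [h1, h2, pow_succ]
    ring
  rw [hq1cast, hεval]
  ring
end

section
/- Let q be an odd prime power and let K be a finite field with exactly q² elements. If t ∈ K is nonzero and satisfies t^q = −t, then t is a square in K if and only if q ≡ 3 (mod 4); equivalently, the quadratic character of K takes the value −(−1)^((q−1)/2) at t. -/
/-- In the field `K` with `q²` elements (`q` odd), a nonzero `t` with `t^q = −t`
is a square iff `q ≡ 3 (mod 4)`; equivalently the quadratic character of `K`
takes the value `−(−1)^((q−1)/2)` at `t`. -/
theorem trace_zero_elements_squares (q : ℕ) (hq : IsPrimePow q) (hodd : Odd q)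
    (K : Type*) [Field K] [Fintype K] [DecidableEq K] (hK : Fintype.card K = q ^ 2)
    (t : K) (ht : t ≠ 0) (htq : t ^ q = -t) :
    (IsSquare t ↔ q % 4 = 3) ∧
      quadraticChar K t = -(-1 : ℤ) ^ ((q - 1) / 2) := by
  obtain ⟨k, rfl⟩ := hodd
  have hchar : ringChar K ≠ 2 := by
    intro h
    have := (FiniteField.even_card_iff_char_two (F := K)).mp h
    rw [hK] at this
    have e : (2 * k + 1) ^ 2 = 2 * (2 * (k * k) + 2 * k) + 1 := by ring
    omega
  have hne : (-1 : K) ≠ 1 := Ring.neg_one_ne_one_of_char_ne_two hchar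
  -- t ^ (q - 1) = -1
  have h1 : t ^ (2 * k) = -1 := by
    have e : t ^ (2 * k) * t = -1 * t := by
      rw [← pow_succ, htq]; ring
    exact mul_right_cancel₀ ht e
  have hdiv : (2 * k + 1) ^ 2 / 2 = (2 * k) * (k + 1) := by
    have : (2 * k + 1) ^ 2 = 2 * ((2 * k) * (k + 1)) + 1 := by ring
    omega
  have hsq : IsSquare t ↔ (-1 : K) ^ (k + 1) = 1 := by
    rw [FiniteField.isSquare_iff hchar ht, hK, hdiv, pow_mul, h1]
  have hmod : (2 * k + 1) % 4 = 3 ↔ Odd k := by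
    rcases Nat.even_or_odd k with ⟨m, rfl⟩ | ⟨m, rfl⟩ <;>
      simp [Nat.odd_iff, Nat.even_iff] <;> omega
  have key : IsSquare t ↔ (2 * k + 1) % 4 = 3 := by
    rw [hsq, hmod]
    rcases Nat.even_or_odd k with he | ho
    · rw [he.add_one.neg_one_pow]
      exact ⟨fun h => absurd h hne, fun h => absurd h (Nat.not_odd_iff_even.mpr he)⟩
    · rw [ho.add_one.neg_one_pow]
      simp [ho]
  refine ⟨key, ?_⟩
  have hhalf : (2 * k + 1 - 1) / 2 = k := by omega
  rw [hhalf]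
  by_cases h3 : (2 * k + 1) % 4 = 3
  · rw [(quadraticChar_one_iff_isSquare ht).mpr (key.mpr h3)]
    have : Odd k := hmod.mp h3
    rw [this.neg_one_pow]; ring
  · rw [quadraticChar_neg_one_iff_not_isSquare.mpr (fun h => h3 (key.mp h))]
    have : Even k := by
      rcases Nat.even_or_odd k with he | ho
      · exact he
      · exact absurd (hmod.mpr ho) h3
    rw [this.neg_one_pow]
end

section
/- Let q be a prime power and let K be a finite field with exactly q² elements. Then the number of triples (α, β, γ) ∈ K × K × K with α ≠ 0 and α·γ^q + α^q·γ = β^(q+1) equals q³·(q² − 1). -/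
open Polynomial

section Aux

variable {K : Type*} [Field K] [Fintype K] [DecidableEq K]

/-- Card of the root set of a nonzero polynomial is at most its natDegree. -/
lemma aux_card_roots_le (f : K[X]) (hf : f ≠ 0) :
    Fintype.card {x : K // f.IsRoot x} ≤ f.natDegree := by
  rw [Fintype.card_subtype]
  apply Polynomial.card_le_degree_of_subset_roots
  intro x hx
  simp only [Finset.mem_val, Finset.mem_filter, Finset.mem_univ, true_and] at hx
  rw [Polynomial.mem_roots hf]
  exact hx

variable {p n : ℕ}

lemma aux_fiber_card (hp : p.Prime) (hn : 0 < n) [CharP K p]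
    (hK : Fintype.card K = (p ^ n) ^ 2) (c : K) (hc : c ^ (p ^ n) = c) :
    Nat.card {x : K // x ^ (p ^ n) + x = c} = p ^ n := by
  haveI : Fact p.Prime := ⟨hp⟩
  set q : ℕ := p ^ n with hq
  have hq1 : 1 < q := Nat.one_lt_pow hn.ne' hp.one_lt
  have hadd : ∀ a b : K, (a + b) ^ q = a ^ q + b ^ q := fun a b => by
    rw [hq]; exact add_pow_char_pow a b p n
  -- the additive map T x = x^q + x
  let T : K →+ K :=
    { toFun := fun x => x ^ q + x
      map_zero' := by simp [zero_pow (by omega : q ≠ 0)]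
      map_add' := by
        intro a b
        show (a + b) ^ q + (a + b) = (a ^ q + a) + (b ^ q + b)
        rw [hadd]; ring }
  have hT : ∀ x : K, T x = x ^ q + x := fun _ => rfl
  -- kernel card ≤ q, via roots of X^q + X
  have hker_le : Fintype.card {x : K // T x = 0} ≤ q := by
    have hdeg : ((X : K[X]) ^ q + X).natDegree = q := by
      rw [natDegree_add_eq_left_of_natDegree_lt] <;>
        simp [natDegree_X_pow, natDegree_X, hq1]
    have hne : ((X : K[X]) ^ q + X) ≠ 0 := by
      intro h
      rw [h] at hdeg
      simp only [natDegree_zero] at hdeg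
      omega
    have heq : Fintype.card {x : K // T x = 0}
        = Fintype.card {x : K // ((X : K[X]) ^ q + X).IsRoot x} := by
      apply Fintype.card_congr
      apply Equiv.subtypeEquivRight
      intro x
      simp [hT, Polynomial.IsRoot]
    rw [heq]
    exact le_trans (aux_card_roots_le _ hne) (le_of_eq hdeg)
  -- fixed points card ≤ q, via roots of X^q - X
  have hfix_le : Fintype.card {x : K // x ^ q = x} ≤ q := by
    have hdeg : ((X : K[X]) ^ q - X).natDegree = q := by
      rw [natDegree_sub_eq_left_of_natDegree_lt] <;>
        simp [natDegree_X_pow, natDegree_X, hq1]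
    have hne : ((X : K[X]) ^ q - X) ≠ 0 := by
      intro h
      rw [h] at hdeg
      simp only [natDegree_zero] at hdeg
      omega
    have heq : Fintype.card {x : K // x ^ q = x}
        = Fintype.card {x : K // ((X : K[X]) ^ q - X).IsRoot x} := by
      apply Fintype.card_congr
      apply Equiv.subtypeEquivRight
      intro x
      simp [Polynomial.IsRoot, sub_eq_zero]
    rw [heq]
    exact le_trans (aux_card_roots_le _ hne) (le_of_eq hdeg)
  -- range of T is contained in fixed points
  have hrange_fix : ∀ x : K, (T x) ^ q = T x := by
    intro x
    have hx : x ^ (q * q) = x := by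
      have := FiniteField.pow_card x (K := K)
      rwa [hK, sq] at this
    rw [hT, hadd, ← pow_mul, hx]
    ring
  -- first isomorphism: card K = card range * card ker
  have hcardK : Fintype.card K = Nat.card T.range * Nat.card T.ker := by
    rw [← Nat.card_eq_fintype_card,
      AddSubgroup.card_eq_card_quotient_mul_card_addSubgroup T.ker,
      Nat.card_congr (QuotientAddGroup.quotientKerEquivRange T).toEquiv]
  have hker_eq : Nat.card T.ker = Fintype.card {x : K // T x = 0} := by
    rw [Nat.card_eq_fintype_card]
    exact Fintype.card_congr (Equiv.subtypeEquivRight fun x => by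
      simp [AddMonoidHom.mem_ker])
  -- range as a subset of fixed points
  have hsub : (T.range : Set K) ⊆ {x : K | x ^ q = x} := by
    rintro x ⟨y, rfl⟩
    exact hrange_fix y
  have hfix_ncard : ({x : K | x ^ q = x}).ncard ≤ q := by
    rw [← Nat.card_coe_set_eq, Nat.card_eq_fintype_card]
    exact le_trans (le_of_eq (Fintype.card_congr (Equiv.subtypeEquivRight fun x => by
      simp))) hfix_le
  have hrange_le : Nat.card T.range ≤ q := by
    have h0 : Nat.card T.range = ((T.range : Set K)).ncard := by
      rw [← Nat.card_coe_set_eq]; rfl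
    rw [h0]
    exact le_trans (Set.ncard_le_ncard hsub (Set.toFinite _)) hfix_ncard
  -- deduce card ker = q and card range = q
  have hkerpos : 0 < Nat.card T.ker := Nat.card_pos
  have hrangepos : 0 < Nat.card T.range := Nat.card_pos
  have h2 : Nat.card T.range * Nat.card T.ker = q * q := by
    rw [← hcardK, hK, sq]
  have hk_le : Nat.card T.ker ≤ q := by rw [hker_eq]; exact hker_le
  have hker_card : Nat.card T.ker = q := by nlinarith
  have hrange_card : Nat.card T.range = q := by
    rw [hker_card] at h2
    exact Nat.eq_of_mul_eq_mul_right (by omega) h2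
  -- range = fixed points by cardinality, so c is in the range
  have hseteq : (T.range : Set K) = {x : K | x ^ q = x} := by
    apply Set.eq_of_subset_of_ncard_le hsub _ (Set.toFinite _)
    rw [← Nat.card_coe_set_eq]
    calc ({x : K | x ^ q = x}).ncard ≤ q := hfix_ncard
      _ = Nat.card (T.range : Set K) := by
          rw [Nat.card_coe_set_eq, ← Nat.card_coe_set_eq] at *
          exact hrange_card.symm
  have hc_mem : ∃ x : K, T x = c := by
    have : c ∈ (T.range : Set K) := by rw [hseteq]; exact hc
    exact this
  -- fiber over c is a coset of the kernel
  obtain ⟨x₀, hx₀⟩ := hc_mem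
  have hfiber : Nat.card {x : K // x ^ q + x = c} = Nat.card T.ker := by
    apply Nat.card_congr
    refine ⟨fun x => ⟨(x : K) - x₀, ?_⟩, fun y => ⟨(y : K) + x₀, ?_⟩, ?_, ?_⟩
    · rw [AddMonoidHom.mem_ker, map_sub, hx₀]
      have hx : T (x : K) = c := by rw [hT]; exact x.2
      rw [hx, sub_self]
    · have hy : T (y : K) = 0 := AddMonoidHom.mem_ker.1 y.2
      have : T ((y : K) + x₀) = c := by rw [map_add, hy, hx₀, zero_add]
      rw [hT] at this
      exact this
    · intro x; apply Subtype.ext; simp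
    · intro y; apply Subtype.ext; simp
  rw [hfiber, hker_card]

end Aux

/-- The number of triples `(α,β,γ)` over the field with `q²` elements with `α ≠ 0`
and `α·γ^q + α^q·γ = β^(q+1)` equals `q³·(q² − 1)`. -/
theorem borel_unitary_order (q : ℕ) (hq : IsPrimePow q)
    (K : Type*) [Field K] [Fintype K] (hK : Fintype.card K = q ^ 2) :
    Nat.card {v : K × K × K //
        v.1 ≠ 0 ∧ v.1 * v.2.2 ^ q + v.1 ^ q * v.2.2 = v.2.1 ^ (q + 1)}
      = q ^ 3 * (q ^ 2 - 1) := by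
  classical
  obtain ⟨p, n, hp, hn, rfl⟩ := hq
  have hp' : p.Prime := hp.nat_prime
  set q : ℕ := p ^ n with hqdef
  -- characteristic of K is p
  have hchar : CharP K p := by
    haveI := ringChar.charP K
    obtain ⟨m, hr, hm⟩ := FiniteField.card K (ringChar K)
    have hdvd : ringChar K ∣ p := by
      have h1 : ringChar K ∣ Fintype.card K := hm ▸ dvd_pow_self _ m.2.ne'
      rw [hK, hqdef, ← pow_mul] at h1
      exact hr.dvd_of_dvd_pow h1
    have : ringChar K = p := (Nat.prime_dvd_prime_iff_eq hr hp').1 hdvd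
    rw [← this]
    exact ringChar.charP K
  haveI := hchar
  have hq1 : 1 < q := Nat.one_lt_pow hn.ne' hp'.one_lt
  have hK2 : Fintype.card K = q ^ 2 := hK
  -- x^(q²) = x for all x
  have hpowcard : ∀ x : K, x ^ q ^ 2 = x := fun x => by
    have := FiniteField.pow_card x (K := K); rwa [hK2] at this
  -- the main equivalence
  have e : {v : K × K × K //
        v.1 ≠ 0 ∧ v.1 * v.2.2 ^ q + v.1 ^ q * v.2.2 = v.2.1 ^ (q + 1)} ≃
      {α : K // α ≠ 0} × (Σ β : K, {δ : K // δ ^ q + δ = β ^ (q + 1)}) := by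
    refine ⟨fun v => ⟨⟨v.1.1, v.2.1⟩, v.1.2.1, ⟨v.1.1 ^ q * v.1.2.2, ?_⟩⟩,
      fun w => ⟨(w.1.1, w.2.1, w.2.2.1 / w.1.1 ^ q), ?_, ?_⟩, ?_, ?_⟩
    · obtain ⟨⟨α, β, γ⟩, hα, heq⟩ := v
      have h1 : (α ^ q * γ) ^ q = α * γ ^ q := by
        rw [mul_pow, ← pow_mul, ← sq, hpowcard]
      simp only
      rw [h1]
      exact heq
    · exact w.1.2
    · obtain ⟨⟨α, hα⟩, β, δ, hδ⟩ := w
      have hαq : α ^ q ≠ 0 := pow_ne_zero _ hα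
      simp only
      have h2 : α ^ q * (δ / α ^ q) = δ := mul_div_cancel₀ δ hαq
      have h1 : α * (δ / α ^ q) ^ q = δ ^ q := by
        rw [div_pow, ← pow_mul, ← sq, hpowcard α, mul_comm, div_mul_cancel₀ _ hα]
      rw [h1, h2]
      exact hδ
    · intro v
      apply Subtype.ext
      obtain ⟨⟨α, β, γ⟩, hα, heq⟩ := v
      have hαq : (α : K) ^ q ≠ 0 := pow_ne_zero _ hα
      show ((α, β, α ^ q * γ / α ^ q) : K × K × K) = (α, β, γ)
      rw [mul_div_cancel_left₀ _ hαq]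
    · intro w
      obtain ⟨⟨α, hα⟩, β, δ, hδ⟩ := w
      have hαq : (α : K) ^ q ≠ 0 := pow_ne_zero _ hα
      refine Prod.ext rfl ?_
      simp only
      refine Sigma.ext rfl (heq_of_eq (Subtype.ext ?_))
      simp only
      rw [mul_div_cancel₀ _ hαq]
  rw [Nat.card_congr e, Nat.card_prod]
  -- card of nonzero elements
  have h1 : Nat.card {α : K // α ≠ 0} = q ^ 2 - 1 := by
    rw [← Nat.card_congr (unitsEquivNeZero (G₀ := K)), Nat.card_eq_fintype_card,
      Fintype.card_units, hK2]
  -- card of each sigma fiber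
  have h2 : ∀ β : K, Nat.card {δ : K // δ ^ q + δ = β ^ (q + 1)} = q := by
    intro β
    have hc : (β ^ (q + 1)) ^ q = β ^ (q + 1) := by
      rcases eq_or_ne β 0 with rfl | hβ
      · rw [zero_pow (by omega), zero_pow (by omega)]
      · rw [← pow_mul]
        have : (q + 1) * q = q ^ 2 + q := by ring
        rw [this, pow_add, hpowcard, pow_succ]
        ring
    exact aux_fiber_card hp' hn (by rw [hK2]) _ hc
  have h3 : Nat.card (Σ β : K, {δ : K // δ ^ q + δ = β ^ (q + 1)}) = q ^ 2 * q := by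
    rw [Nat.card_eq_fintype_card, Fintype.card_sigma]
    have hfib : ∀ β : K, Fintype.card {δ : K // δ ^ q + δ = β ^ (q + 1)} = q := by
      intro β
      rw [← Nat.card_eq_fintype_card]
      exact h2 β
    rw [Finset.sum_congr rfl (fun β _ => hfib β), Finset.sum_const, Finset.card_univ, hK2,
      smul_eq_mul]
  rw [h1, h3]
  ring
end

section
/- Let q be a prime power, F a finite field with exactly q elements, E a finite field with exactly q² elements equipped with an F-algebra structure, and K an algebraic closure of F. Let κ : E → M₂(F) be an F-algebra homomorphism into the 2×2 matrices over F. Then there exist u, v ∈ K and a ring homomorphism ι : E → K such that u·v^q − u^q·v = 1 and, for every β ∈ E, the matrix κ(β), with entries viewed in K, sends the column vector (u, v) to (ι(β)·u, ι(β)·v). -/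
open Matrix

open Polynomial

lemma aeval_mulVec_eigen {F K : Type*} [Field F] [Field K] [Algebra F K]
    (A : Matrix (Fin 2) (Fin 2) K) (w : Fin 2 → K) (lam : K)
    (h : A *ᵥ w = lam • w) (f : F[X]) :
    (aeval A f) *ᵥ w = (aeval lam f) • w := by
  have hpow : ∀ n : ℕ, A ^ n *ᵥ w = lam ^ n • w := by
    intro n
    induction n with
    | zero => simp
    | succ n ih =>
      rw [pow_succ, pow_succ, ← Matrix.mulVec_mulVec, h, Matrix.mulVec_smul, ih, smul_smul,
        mul_comm]
  induction f using Polynomial.induction_on' with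
  | add p r hp hr => rw [map_add, map_add, Matrix.add_mulVec, hp, hr, add_smul]
  | monomial n c =>
    rw [aeval_monomial, aeval_monomial, ← Matrix.mulVec_mulVec, hpow, Matrix.mulVec_smul,
      Algebra.algebraMap_eq_smul_one, Matrix.smul_mulVec, Matrix.one_mulVec,
      mul_smul, algebraMap_smul, smul_comm]

/-- Given an `F`-algebra embedding `κ` of the field `E` with `q²` elements into
`M₂(F)`, `F` the field with `q` elements, there is a point `(u,v)` on the
Deligne–Lusztig curve `X·Y^q − X^q·Y = 1` over an algebraic closure `K` of `F`
which is a simultaneous eigenvector for all `κ(β)`, with eigenvalues given by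
a ring embedding `ι : E → K`. -/
theorem base_point_exists (q : ℕ) (hq : IsPrimePow q)
    (F : Type*) [Field F] [Fintype F] (hF : Fintype.card F = q)
    (E : Type*) [Field E] [Fintype E] [Algebra F E] (hE : Fintype.card E = q ^ 2)
    (K : Type*) [Field K] [Algebra F K] [IsAlgClosure F K]
    (κ : E →ₐ[F] Matrix (Fin 2) (Fin 2) F) :
    ∃ (u v : K) (ι : E →+* K), u * v ^ q - u ^ q * v = 1 ∧
      ∀ β : E, (κ β).map (algebraMap F K) *ᵥ ![u, v] = ι β • ![u, v] := by
  classical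
  haveI : IsAlgClosed K := IsAlgClosure.isAlgClosed F
  have hq2 : 2 ≤ q := hq.two_le
  -- characteristic
  set p := ringChar F with hp
  haveI hpF : CharP F p := ringChar.charP F
  obtain ⟨n, hpprime, hcard⟩ := FiniteField.card F p
  haveI : Fact p.Prime := ⟨hpprime⟩
  have hqp : q = p ^ (n : ℕ) := by rw [← hF, hcard]
  haveI hpK : CharP K p := charP_of_injective_algebraMap (algebraMap F K).injective p
  haveI hpE : CharP E p := charP_of_injective_algebraMap (algebraMap F E).injective p
  -- power basis
  let pb : PowerBasis F E := Field.powerBasisOfFiniteOfSeparable F E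
  set g : E := pb.gen with hg
  -- the mapped matrix
  let Φ : Matrix (Fin 2) (Fin 2) F →ₐ[F] Matrix (Fin 2) (Fin 2) K :=
    (Algebra.ofId F K).mapMatrix
  have hΦ : ∀ M : Matrix (Fin 2) (Fin 2) F, Φ M = M.map (algebraMap F K) := fun M => rfl
  set A : Matrix (Fin 2) (Fin 2) K := (κ g).map (algebraMap F K) with hA
  -- eigenvalue and eigenvector
  obtain ⟨μ, hμ⟩ := Module.End.exists_eigenvalue (Matrix.toLin' A)
  obtain ⟨w, hw⟩ := hμ.exists_hasEigenvector
  have hw0 : w ≠ 0 := hw.right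
  have heig : A *ᵥ w = μ • w := by
    rw [← Matrix.toLin'_apply]; exact hw.apply_eq_smul
  -- μ is a root of the minimal polynomial of g
  have hminA : aeval A (minpoly F g) = 0 := by
    calc aeval A (minpoly F g) = aeval (Φ (κ g)) (minpoly F g) := by rw [hΦ]
      _ = Φ (κ (aeval g (minpoly F g))) := by
            rw [Polynomial.aeval_algHom_apply, Polynomial.aeval_algHom_apply]
      _ = 0 := by rw [minpoly.aeval, map_zero, map_zero]
  have hmin : aeval μ (minpoly F g) = 0 := by
    have := aeval_mulVec_eigen A w μ heig (minpoly F g)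
    rw [hminA, Matrix.zero_mulVec] at this
    rcases smul_eq_zero.mp this.symm with h | h
    · exact h
    · exact absurd h hw0
  -- the embedding
  let ι₀ : E →ₐ[F] K := pb.lift μ hmin
  have hι₀g : ι₀ g = μ := pb.lift_gen μ hmin
  -- simultaneous eigenvector property
  have key : ∀ β : E, (κ β).map (algebraMap F K) *ᵥ w = ι₀ β • w := by
    intro β
    obtain ⟨f, rfl⟩ := pb.exists_eq_aeval' β
    have h1 : (κ (aeval g f)).map (algebraMap F K) = aeval A f := by
      rw [← hΦ, ← Polynomial.aeval_algHom_apply, ← Polynomial.aeval_algHom_apply, hΦ]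
    have h2 : ι₀ (aeval g f) = aeval μ f := by
      rw [← Polynomial.aeval_algHom_apply, hι₀g]
    rw [h1, h2, aeval_mulVec_eigen A w μ heig f]
  -- nondegeneracy
  have hd : w 0 * w 1 ^ q - (w 0) ^ q * w 1 ≠ 0 := by
    intro hd
    have hd' : w 0 * w 1 ^ q = w 0 ^ q * w 1 := by linear_combination hd
    -- the q-power Frobenius on K
    let φ : K →+* K := iterateFrobenius K p n
    have hφ : ∀ x : K, φ x = x ^ q := fun x => by
      rw [show φ x = x ^ p ^ (n : ℕ) from rfl, ← hqp]
    -- entries of A are fixed by φ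
    have hAfix : ∀ i j, A i j ^ q = A i j := by
      intro i j
      rw [hA, Matrix.map_apply, ← map_pow, ← hF, FiniteField.pow_card]
    -- Frobenius of the eigenvector is again an eigenvector, with eigenvalue μ^q
    have heig' : A *ᵥ (fun i => w i ^ q) = (μ ^ q) • fun i => w i ^ q := by
      funext i
      have hthis : ∑ j, A i j * w j = μ * w i := by
        have := congrFun heig i
        simpa [Matrix.mulVec, dotProduct] using this
      have : (A *ᵥ fun i => w i ^ q) i = ∑ j, A i j * w j ^ q := by
        simp [Matrix.mulVec, dotProduct]
      rw [this]
      calc ∑ j, A i j * w j ^ q = ∑ j, φ (A i j * w j) := by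
            refine Finset.sum_congr rfl fun j _ => ?_
            rw [hφ, mul_pow, hAfix]
        _ = φ (∑ j, A i j * w j) := (map_sum φ _ _).symm
        _ = μ ^ q * w i ^ q := by rw [hthis, hφ, mul_pow]
        _ = ((μ ^ q) • fun i => w i ^ q) i := by simp
    -- proportionality
    obtain ⟨i0, hi0⟩ := Function.ne_iff.mp hw0
    have hi0' : w i0 ≠ 0 := by simpa using hi0
    have h10 : w 1 * w 0 ^ q = w 1 ^ q * w 0 := by linear_combination (-1 : K) * hd'
    have base : ∀ i j : Fin 2, w i * w j ^ q = w i ^ q * w j := by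
      intro i j
      fin_cases i <;> fin_cases j
      · ring
      · exact hd'
      · exact h10
      · ring
    have hprop : ∃ c : K, c ≠ 0 ∧ (fun i => w i ^ q) = c • w := by
      refine ⟨w i0 ^ q / w i0, div_ne_zero (pow_ne_zero _ hi0') hi0', ?_⟩
      funext i
      show w i ^ q = (w i0 ^ q / w i0) • w i
      rw [smul_eq_mul, div_mul_eq_mul_div, eq_div_iff hi0']
      linear_combination base i0 i
    obtain ⟨c, hc0, hc⟩ := hprop
    have hμq : μ ^ q = μ := by
      have h1 := congrFun heig' i0
      have hL : (A *ᵥ fun i => w i ^ q) i0 = c * (μ * w i0) := by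
        rw [hc, Matrix.mulVec_smul, heig]; simp [mul_assoc]
      have hR : (μ ^ q • fun i => w i ^ q) i0 = μ ^ q * (c * w i0) := by
        have h3 : w i0 ^ q = c * w i0 := congrFun hc i0
        simp [h3]
      have h5 : (μ ^ q - μ) * (c * w i0) = 0 := by
        have h6 := hL.symm.trans (h1.trans hR)
        linear_combination -h6
      rcases mul_eq_zero.mp h5 with h | h
      · exact sub_eq_zero.mp h
      · exact absurd h (mul_ne_zero hc0 hi0')
    -- hence g^q = g
    have hinj : Function.Injective ι₀ := RingHom.injective (ι₀ : E →+* K)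
    have hgq : g ^ q = g := by
      apply hinj
      rw [map_pow, hι₀g, hμq]
    -- the q-power map on E is the identity
    let ψ : E →ₐ[F] E :=
      { iterateFrobenius E p n with
        commutes' := fun c => by
          show iterateFrobenius E p n (algebraMap F E c) = algebraMap F E c
          rw [iterateFrobenius_def, ← hqp, ← map_pow, ← hF, FiniteField.pow_card] }
    have hψ : ∀ x : E, ψ x = x ^ q := fun x => by
      show iterateFrobenius E p n x = x ^ q
      rw [iterateFrobenius_def, ← hqp]
    have hψid : ψ = AlgHom.id F E := pb.algHom_ext (by rw [hψ, ← hg, hgq]; rfl)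
    have hall : ∀ x : E, x ^ q = x := fun x => by
      have h7 := congrArg (fun f : E →ₐ[F] E => f x) hψid
      simpa [hψ x] using h7
    -- too many roots of X^q - X
    set P : E[X] := X ^ q - X with hP
    have hP0 : P ≠ 0 := by
      intro h
      have hco : P.coeff q = 1 := by
        rw [hP, Polynomial.coeff_sub, Polynomial.coeff_X_pow, if_pos rfl,
          Polynomial.coeff_X, if_neg (by omega)]
        ring
      rw [h] at hco
      simp at hco
    have hdeg : P.natDegree ≤ q := by
      refine le_trans (Polynomial.natDegree_sub_le _ _) ?_
      simp [Polynomial.natDegree_X_pow]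
      omega
    have hsub : (Finset.univ : Finset E) ⊆ P.roots.toFinset := by
      intro x _
      rw [Multiset.mem_toFinset, Polynomial.mem_roots hP0]
      simp [Polynomial.IsRoot, hP, hall x]
    have hcard : q ^ 2 ≤ q := by
      calc q ^ 2 = (Finset.univ : Finset E).card := by rw [Finset.card_univ, hE]
        _ ≤ P.roots.toFinset.card := Finset.card_le_card hsub
        _ ≤ Multiset.card P.roots := P.roots.toFinset_card_le
        _ ≤ P.natDegree := P.card_roots'
        _ ≤ q := hdeg
    nlinarith
  -- rescale
  set d : K := w 0 * w 1 ^ q - (w 0) ^ q * w 1 with hdd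
  obtain ⟨t, ht⟩ := IsAlgClosed.exists_pow_nat_eq (k := K) d⁻¹ (n := q + 1) (by omega)
  have ht0 : t ≠ 0 := by
    intro h
    rw [h, zero_pow (by omega)] at ht
    exact hd (by simpa using (inv_eq_zero.mp ht.symm))
  refine ⟨t * w 0, t * w 1, ι₀.toRingHom, ?_, ?_⟩
  · have : t * (t * w 1) ^ q = t ^ (q + 1) * w 1 ^ q := by ring
    calc t * w 0 * (t * w 1) ^ q - (t * w 0) ^ q * (t * w 1)
        = t ^ (q + 1) * (w 0 * w 1 ^ q - (w 0) ^ q * w 1) := by ring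
      _ = 1 := by rw [ht, ← hdd, inv_mul_cancel₀ hd]
  · intro β
    have hvec : ![t * w 0, t * w 1] = t • w := by
      funext i
      fin_cases i <;> simp
    rw [hvec, Matrix.mulVec_smul, key β, smul_comm]
    rfl
end
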